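/- For the sequence α_k = k² (so g(x) = Li_{-1}(x) = x/(1-x)²), the numbers b_n = n! · [x^n] exp(-x/(1-x)²) are integers for every n ≥ 0, with b₀ = 1, b₁ = -1, b₂ = -3, b₃ = -7, b₄ = 1. -/

import Mathlib

noncomputable def expPS (f : PowerSeries ℚ) : PowerSeries ℚ :=
  PowerSeries.mk fun n =>
    ∑ m ∈ Finset.range (n + 1), ((m.factorial : ℚ))⁻¹ * PowerSeries.coeff n (f ^ m)

/-!
Since `g = ∑ -k xᵏ` has no constant term, the truncation in `expPS` is harmless and `E = expPS g`
satisfies `E' = g' E`. Comparing coefficients gives, for `b n = n! [xⁿ] E` and `c k = k! [xᵏ] g`,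
the recursion `b (n + 1) = ∑ i ≤ n, C(n, i) c (i + 1) b (n - i)`. Here `c k = -k·k!` is an integer,
so every `b n` is an integer by induction, and the first values are read off the recursion.
-/

open PowerSeries Finset Nat

noncomputable def expPartialSum (f : ℚ⟦X⟧) (N : ℕ) : ℚ⟦X⟧ :=
  ∑ m ∈ range N, ((m ! : ℚ))⁻¹ • f ^ m

noncomputable def egfCoeff (f : ℚ⟦X⟧) (n : ℕ) : ℚ := n ! * coeff n f

section
variable {f : ℚ⟦X⟧}

lemma coeff_pow_eq_zero_of_lt (hf : constantCoeff f = 0) {m n : ℕ} (h : n < m) :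
    coeff n (f ^ m) = 0 :=
  X_pow_dvd_iff.mp (pow_dvd_pow_of_dvd (X_dvd_iff.mpr hf) m) n h

lemma X_pow_dvd_expPS_sub_expPartialSum (hf : constantCoeff f = 0) (N : ℕ) :
    X ^ N ∣ expPS f - expPartialSum f N := by
  refine X_pow_dvd_iff.mpr fun n hn => ?_
  rw [map_sub, sub_eq_zero, expPS, coeff_mk, expPartialSum, map_sum]
  simp only [coeff_smul, smul_eq_mul]
  exact sum_subset (range_subset_range.mpr hn) fun m _ hm => by
    rw [coeff_pow_eq_zero_of_lt hf (by simpa using hm), mul_zero]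

lemma expPartialSum_succ (f : ℚ⟦X⟧) (N : ℕ) :
    expPartialSum f (N + 1) = expPartialSum f N + ((N ! : ℚ))⁻¹ • f ^ N :=
  sum_range_succ _ _

lemma derivative_expPartialSum_succ (f : ℚ⟦X⟧) (N : ℕ) :
    d⁄dX ℚ (expPartialSum f (N + 1)) = d⁄dX ℚ f * expPartialSum f N := by
  induction N with
  | zero => simp [expPartialSum]
  | succ N ih =>
    rw [expPartialSum_succ, map_add, ih, expPartialSum_succ f N, Derivation.map_smul,
      derivative_pow, Nat.add_sub_cancel, factorial_succ, smul_eq_C_mul, smul_eq_C_mul]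
    have hcoeff : C ((((N + 1) * N ! : ℕ) : ℚ))⁻¹ * ((N + 1 : ℕ) : ℚ⟦X⟧) = C ((N ! : ℚ))⁻¹ := by
      rw [← map_natCast C, ← map_mul]
      congr 1
      push_cast
      field_simp
    linear_combination (f ^ N * d⁄dX ℚ f) * hcoeff

theorem derivative_expPS (hf : constantCoeff f = 0) :
    d⁄dX ℚ (expPS f) = d⁄dX ℚ f * expPS f := by
  ext n
  have hhead : coeff (n + 1) (expPS f) = coeff (n + 1) (expPartialSum f (n + 2)) :=
    sub_eq_zero.mp <| by
      simpa using
        X_pow_dvd_iff.mp (X_pow_dvd_expPS_sub_expPartialSum hf (n + 2)) (n + 1) (by omega)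
  have htail : X ^ (n + 1) ∣ d⁄dX ℚ f * expPS f - d⁄dX ℚ f * expPartialSum f (n + 1) := by
    rw [← mul_sub]
    exact dvd_mul_of_dvd_right (X_pow_dvd_expPS_sub_expPartialSum hf (n + 1)) _
  rw [coeff_derivative, hhead, ← coeff_derivative, derivative_expPartialSum_succ]
  exact (sub_eq_zero.mp (by simpa using X_pow_dvd_iff.mp htail n (by omega))).symm

end

lemma egfCoeff_expPS_zero (f : ℚ⟦X⟧) : egfCoeff (expPS f) 0 = 1 := by
  simp [egfCoeff, expPS]

lemma egfCoeff_expPS_succ {f : ℚ⟦X⟧} (hf : constantCoeff f = 0) (n : ℕ) :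
    egfCoeff (expPS f) (n + 1) =
      ∑ i ∈ range (n + 1), n.choose i * egfCoeff f (i + 1) * egfCoeff (expPS f) (n - i) := by
  have hcoeff := congrArg (coeff n) (derivative_expPS hf)
  rw [coeff_derivative, coeff_mul, Nat.sum_antidiagonal_eq_sum_range_succ_mk] at hcoeff
  simp only [coeff_derivative] at hcoeff
  rw [egfCoeff, factorial_succ, cast_mul, mul_comm, cast_succ, ← mul_assoc, hcoeff, sum_mul]
  refine sum_congr rfl fun i hi => ?_
  have hn : (n ! : ℚ) = n.choose i * i ! * (n - i)! := by
    exact_mod_cast (choose_mul_factorial_mul_factorial (by simpa [Nat.lt_succ_iff] using hi)).symm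
  rw [egfCoeff, egfCoeff, factorial_succ, hn]
  push_cast
  ring

theorem egfCoeff_expPS_mem_bot {f : ℚ⟦X⟧} (hf : constantCoeff f = 0)
    (hint : ∀ k, egfCoeff f k ∈ (⊥ : Subring ℚ)) (n : ℕ) :
    egfCoeff (expPS f) n ∈ (⊥ : Subring ℚ) := by
  induction n using Nat.strong_induction_on with
  | _ n ih =>
    rcases n with _ | n
    · rw [egfCoeff_expPS_zero]
      exact one_mem _
    · rw [egfCoeff_expPS_succ hf]
      exact sum_mem fun i _ =>
        mul_mem (mul_mem (natCast_mem _ _) (hint _)) (ih _ (by omega))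

theorem stmt14 (f : PowerSeries ℚ)
    (hf : f = expPS (PowerSeries.mk fun k => -(k : ℚ)))
    (b : ℕ → ℚ) (hb : ∀ m, b m = (m.factorial : ℚ) * PowerSeries.coeff m f) :
    (∀ m, ∃ z : ℤ, b m = (z : ℚ)) ∧
    b 0 = 1 ∧ b 1 = -1 ∧ b 2 = -3 ∧ b 3 = -7 ∧ b 4 = 1 := by
  set g : ℚ⟦X⟧ := mk fun k => -(k : ℚ)
  have hg : constantCoeff g = 0 := by simp [g]
  have hegf_g (k : ℕ) : egfCoeff g k = -(k ! * k : ℤ) := by simp [egfCoeff, g]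
  obtain rfl : b = egfCoeff (expPS g) := funext (hf ▸ hb)
  have hrec (n : ℕ) := egfCoeff_expPS_succ hg n
  simp only [hegf_g] at hrec
  have h0 := egfCoeff_expPS_zero g
  have h1 : egfCoeff (expPS g) 1 = -1 := by
    rw [hrec]; norm_num [sum_range_succ, h0]
  have h2 : egfCoeff (expPS g) 2 = -3 := by
    rw [hrec]; norm_num [sum_range_succ, h0, h1]
  have h3 : egfCoeff (expPS g) 3 = -7 := by
    rw [hrec]; norm_num [sum_range_succ, h0, h1, h2, Nat.choose]
  have h4 : egfCoeff (expPS g) 4 = 1 := by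
    rw [hrec]; norm_num [sum_range_succ, h0, h1, h2, h3, Nat.choose, factorial]
  refine ⟨fun m => ?_, h0, h1, h2, h3, h4⟩
  obtain ⟨z, hz⟩ := Subring.mem_bot.mp <|
    egfCoeff_expPS_mem_bot hg (fun k => Subring.mem_bot.mpr ⟨_, (hegf_g k).symm⟩) m
  exact ⟨z, hz.symm⟩
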